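/- arXiv:1708.07446 — 3 statements merged into one kernel-verified Lean document; each statement's English description precedes it below -/
import Mathlib

section
/- Let (X_t)_{t∈ℤ} be a centered, square-integrable process satisfying X_t − φ X_{t−1} = Z_t with covariance-stationary covariances γ and r. Then for every k ∈ ℤ, the series Σ_{i=0}^{∞} φ^i r(k+i) converges and γ(k) − φ γ(k−1) = Σ_{i=0}^{∞} φ^i r(k+i). -/
open MeasureTheory ProbabilityTheory Filter

variable {Ω : Type*} [MeasureSpace Ω]

lemma aux_integrable_mul {f g : Ω → ℝ} (hf : MemLp f 2 (ℙ : Measure Ω))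
    (hg : MemLp g 2 (ℙ : Measure Ω)) :
    Integrable (fun ω => f ω * g ω) (ℙ : Measure Ω) := by
  have h : (1 : ENNReal) / 1 = 1 / 2 + 1 / 2 := by
    rw [ENNReal.div_add_div_same, one_div_one, one_add_one_eq_two]
    exact (ENNReal.div_self (two_ne_zero) (ENNReal.ofNat_ne_top)).symm
  have := hg.smul hf (r := 1)
  rwa [memLp_one_iff_integrable] at this

lemma aux_cauchy_schwarz {f g : Ω → ℝ} (hf : MemLp f 2 (ℙ : Measure Ω))
    (hg : MemLp g 2 (ℙ : Measure Ω)) :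
    |∫ ω, f ω * g ω| ≤ (∫ ω, f ω * f ω) ^ ((1:ℝ)/2) * (∫ ω, g ω * g ω) ^ ((1:ℝ)/2) := by
  have hcs := integral_mul_norm_le_Lp_mul_Lq (μ := (ℙ : Measure Ω))
    (Real.HolderConjugate.two_two)
    (by simpa using hf) (by simpa using hg)
  have h1 : |∫ ω, f ω * g ω| ≤ ∫ ω, ‖f ω‖ * ‖g ω‖ := by
    rw [← Real.norm_eq_abs]
    refine (norm_integral_le_integral_norm _).trans_eq ?_
    congr 1; ext ω; rw [norm_mul]
  have e1 : ∀ h : Ω → ℝ, (∫ ω, ‖h ω‖ ^ (2:ℝ) ∂(ℙ : Measure Ω)) = ∫ ω, h ω * h ω ∂(ℙ : Measure Ω) := by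
    intro h; congr 1; ext ω
    rw [show ((2:ℝ)) = ((2:ℕ):ℝ) by norm_num, Real.rpow_natCast]
    simp [sq, Real.norm_eq_abs, abs_mul_abs_self]
  rw [e1, e1] at hcs
  exact h1.trans hcs

/-- For every `k`, the series `∑_{i=0}^∞ φ^i r(k+i)` converges and equals
`γ(k) - φ γ(k-1)`. -/
theorem gamma_recursion_series
    [IsProbabilityMeasure (ℙ : Measure Ω)]
    (X Z : ℤ → Ω → ℝ) (φ : ℝ) (hφ : φ ∈ Set.Ioo (0 : ℝ) 1)
    (hX2 : ∀ t : ℤ, MemLp (X t) 2 (ℙ : Measure Ω))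
    (hZ2 : ∀ t : ℤ, MemLp (Z t) 2 (ℙ : Measure Ω))
    (hXc : ∀ t : ℤ, ∫ ω, X t ω ∂(ℙ : Measure Ω) = 0)
    (hZc : ∀ t : ℤ, ∫ ω, Z t ω ∂(ℙ : Measure Ω) = 0)
    (hAR : ∀ (t : ℤ) (ω : Ω), X t ω - φ * X (t - 1) ω = Z t ω)
    (γ r : ℤ → ℝ)
    (hγ : ∀ t n : ℤ, γ n = ∫ ω, X t ω * X (t + n) ω ∂(ℙ : Measure Ω))
    (hr : ∀ t n : ℤ, r n = ∫ ω, Z t ω * Z (t + n) ω ∂(ℙ : Measure Ω))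
    :
    ∀ k : ℤ,
      Tendsto (fun m : ℕ => ∑ i ∈ Finset.range m, φ ^ i * r (k + i))
        atTop (nhds (γ k - φ * γ (k - 1))) := by
  intro k
  obtain ⟨hφ0, hφ1⟩ := hφ
  set f : ℕ → ℝ := fun m => ∫ ω, X (-(m:ℤ)) ω * Z k ω with hfdef
  -- value of f 0
  have hf0 : f 0 = γ k - φ * γ (k - 1) := by
    have hint1 : Integrable (fun ω => X 0 ω * X k ω) (ℙ : Measure Ω) :=
      aux_integrable_mul (hX2 0) (hX2 k)
    have hint2 : Integrable (fun ω => φ * (X 0 ω * X (k - 1) ω)) (ℙ : Measure Ω) :=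
      (aux_integrable_mul (hX2 0) (hX2 (k - 1))).const_mul φ
    have e : ∀ ω, X 0 ω * Z k ω
        = X 0 ω * X k ω - φ * (X 0 ω * X (k - 1) ω) := by
      intro ω
      have h := hAR k ω
      linear_combination (-(X 0 ω)) * h
    simp only [hfdef, Nat.cast_zero, neg_zero]
    rw [integral_congr_ae (Eventually.of_forall e), integral_sub hint1 hint2,
      integral_const_mul]
    rw [hγ 0 k, hγ 0 (k - 1), zero_add, zero_add]
  -- recurrence for f
  have hrec : ∀ m : ℕ, f m = φ * f (m + 1) + r (k + m) := by
    intro m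
    have e : ∀ ω, X (-(m:ℤ)) ω * Z k ω
        = φ * (X (-((m:ℕ)+1:ℕ):ℤ) ω * Z k ω) + Z (-(m:ℤ)) ω * Z k ω := by
      intro ω
      have h := hAR (-(m:ℤ)) ω
      have e2 : (-((m:ℕ)+1:ℕ):ℤ) = -(m:ℤ) - 1 := by push_cast; ring
      rw [e2]
      linear_combination (Z k ω) * h
    have hint1 : Integrable (fun ω => φ * (X (-((m:ℕ)+1:ℕ):ℤ) ω * Z k ω)) (ℙ : Measure Ω) :=
      (aux_integrable_mul (hX2 _) (hZ2 k)).const_mul φ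
    have hint2 : Integrable (fun ω => Z (-(m:ℤ)) ω * Z k ω) (ℙ : Measure Ω) :=
      aux_integrable_mul (hZ2 _) (hZ2 k)
    have hrval : (∫ ω, Z (-(m:ℤ)) ω * Z k ω) = r (k + m) := by
      have e3 : -(m:ℤ) + (k + (m:ℤ)) = k := by ring
      rw [hr (-(m:ℤ)) (k + m), e3]
    simp only [hfdef]
    rw [integral_congr_ae (Eventually.of_forall e), integral_add hint1 hint2,
      integral_const_mul, hrval]
  -- partial sum formula
  have hsum : ∀ m : ℕ, ∑ i ∈ Finset.range m, φ ^ i * r (k + i) = f 0 - φ ^ m * f m := by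
    intro m
    induction m with
    | zero => simp
    | succ m ih =>
      rw [Finset.sum_range_succ, ih]
      have h := hrec m
      linear_combination (-(φ ^ m)) * h
  -- bound on f
  set C : ℝ := (γ 0) ^ ((1:ℝ)/2) * (r 0) ^ ((1:ℝ)/2) with hC
  have hbound : ∀ m : ℕ, |f m| ≤ C := by
    intro m
    have h := aux_cauchy_schwarz (hX2 (-(m:ℤ))) (hZ2 k)
    have e1 : (∫ ω, X (-(m:ℤ)) ω * X (-(m:ℤ)) ω) = γ 0 := by
      rw [hγ (-(m:ℤ)) 0, add_zero]
    have e2 : (∫ ω, Z k ω * Z k ω) = r 0 := by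
      rw [hr k 0, add_zero]
    rw [e1, e2] at h
    exact h
  -- conclude
  have h0 : Tendsto (fun m : ℕ => φ ^ m * f m) atTop (nhds 0) := by
    apply squeeze_zero_norm (a := fun m : ℕ => φ ^ m * C)
    · intro m
      rw [Real.norm_eq_abs, abs_mul, abs_pow, abs_of_pos hφ0]
      exact mul_le_mul_of_nonneg_left (hbound m) (pow_nonneg hφ0.le m)
    · simpa using (tendsto_pow_atTop_nhds_zero_of_lt_one hφ0.le hφ1).mul_const C
  have := (tendsto_const_nhds (x := f 0) (f := atTop (α := ℕ))).sub h0
  rw [sub_zero, hf0] at this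
  refine this.congr fun m => ?_
  rw [hsum m, hf0]
end

section
/- Let X = (X_t)_{t∈ℤ} be a strictly stationary, centered, square-integrable process whose autocovariance function γ(n) = Cov(X_0, X_n) satisfies γ(n) ≠ 0 for all n ∈ ℤ. Suppose (H₁, G¹) and (H₂, G²), with H₁, H₂ > 0, G¹ ∈ 𝒢_{H₁}, G² ∈ 𝒢_{H₂}, both satisfy X_t − X_{t−1} = (e^{−H_i} − 1) X_{t−1} + Δ_t G^i for all t ∈ ℤ, and that for each i the autocovariance function r_i(n) = Cov(Δ_0 G^i, Δ_n G^i) vanishes for all n beyond some finite cut-off (i.e., there exists N_i with r_i(m) = 0 for all m ≥ N_i). Then H₁ = H₂ and G¹ = G². -/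
open MeasureTheory ProbabilityTheory Filter Finset

variable {Ω : Type*} [MeasureSpace Ω]

/-- A real-valued process indexed by `ℤ` is strictly stationary if all its
finite-dimensional distributions are invariant under time shifts. -/
def IsStrictlyStationary (X : ℤ → Ω → ℝ) : Prop :=
  ∀ (k : ℕ) (t : ℤ) (n : Fin k → ℤ),
    Measure.map (fun ω (i : Fin k) => X (t + n i) ω) (ℙ : Measure Ω) =
      Measure.map (fun ω (i : Fin k) => X (n i) ω) (ℙ : Measure Ω)

/-- The class `𝒢_H`: processes `G` with `G₀ = 0`, strictly stationary increments,
and such that the partial sums `∑_{t=k}^0 e^{tH} Δ_t G` converge in probability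
as `k → -∞` to an (a.s. finite, i.e. real-valued) random variable. -/
def InClassG (H : ℝ) (G : ℤ → Ω → ℝ) : Prop :=
  (∀ ω, G 0 ω = 0) ∧
  IsStrictlyStationary (fun t ω => G t ω - G (t - 1) ω) ∧
  ∃ ξ : Ω → ℝ,
    TendstoInMeasure (ℙ : Measure Ω)
      (fun (k : ℤ) ω => ∑ t ∈ Finset.Icc k 0, Real.exp ((t : ℝ) * H) * (G t ω - G (t - 1) ω))
      atBot ξ


private lemma shift_integral {Ω : Type*} [MeasureSpace Ω] (X : ℤ → Ω → ℝ)
    (hX : IsStrictlyStationary X) (hm : ∀ t, AEMeasurable (X t) (ℙ : Measure Ω))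
    (t s n : ℤ) :
    ∫ ω, X (t + s) ω * X (t + n) ω ∂(ℙ : Measure Ω) =
      ∫ ω, X s ω * X n ω ∂(ℙ : Measure Ω) := by
  have h := hX 2 t ![s, n]
  have hf : Measurable fun v : Fin 2 → ℝ => v 0 * v 1 :=
    (measurable_pi_apply 0).mul (measurable_pi_apply 1)
  have hpi : ∀ f : Fin 2 → ℤ, AEMeasurable (fun ω (i : Fin 2) => X (f i) ω) (ℙ : Measure Ω) := by
    intro f
    refine ⟨fun ω i => (hm (f i)).mk _ ω,
      measurable_pi_iff.mpr fun i => (hm (f i)).measurable_mk, ?_⟩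
    filter_upwards [(hm (f 0)).ae_eq_mk, (hm (f 1)).ae_eq_mk] with ω h0 h1
    funext i; fin_cases i <;> assumption
  have hg1 : AEMeasurable (fun ω (i : Fin 2) => X (t + ![s, n] i) ω) (ℙ : Measure Ω) :=
    hpi fun i => t + ![s, n] i
  have hg2 : AEMeasurable (fun ω (i : Fin 2) => X (![s, n] i) ω) (ℙ : Measure Ω) :=
    hpi ![s, n]
  have e1 := integral_map (f := fun v : Fin 2 → ℝ => v 0 * v 1) hg1 hf.aestronglyMeasurable
  have e2 := integral_map (f := fun v : Fin 2 → ℝ => v 0 * v 1) hg2 hf.aestronglyMeasurable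
  rw [h, e2] at e1
  simpa using e1.symm

private lemma cov_incr {Ω : Type*} [MeasureSpace Ω] [IsProbabilityMeasure (ℙ : Measure Ω)]
    (X : ℤ → Ω → ℝ) (hX : IsStrictlyStationary X)
    (hX2 : ∀ t : ℤ, MemLp (X t) 2 (ℙ : Measure Ω))
    (hXc : ∀ t : ℤ, ∫ ω, X t ω ∂(ℙ : Measure Ω) = 0)
    (γ : ℤ → ℝ) (hγ : ∀ n : ℤ, γ n = ∫ ω, X 0 ω * X n ω ∂(ℙ : Measure Ω))
    (a : ℝ) (G : ℤ → Ω → ℝ)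
    (hd : ∀ (t : ℤ) (ω : Ω), G t ω - G (t - 1) ω = X t ω - a * X (t - 1) ω)
    (n : ℤ) :
    (∫ ω, (G 0 ω - G (-1) ω) * (G n ω - G (n - 1) ω) ∂(ℙ : Measure Ω)) -
        (∫ ω, (G 0 ω - G (-1) ω) ∂(ℙ : Measure Ω)) *
          (∫ ω, (G n ω - G (n - 1) ω) ∂(ℙ : Measure Ω)) =
      (1 + a ^ 2) * γ n - a * (γ (n + 1) + γ (n - 1)) := by
  have hm : ∀ t : ℤ, AEMeasurable (X t) (ℙ : Measure Ω) := fun t =>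
    (hX2 t).aestronglyMeasurable.aemeasurable
  have hint : ∀ t : ℤ, Integrable (X t) (ℙ : Measure Ω) := fun t =>
    (hX2 t).integrable one_le_two
  have hmul : ∀ s t : ℤ, Integrable (fun ω => X s ω * X t ω) (ℙ : Measure Ω) := by
    intro s t
    have h : MemLp ((X s) • (X t)) 1 (ℙ : Measure Ω) :=
      (hX2 t).smul (hX2 s)
    exact memLp_one_iff_integrable.mp h
  -- increments in terms of X
  have hd0 : ∀ ω, G 0 ω - G (-1) ω = X 0 ω - a * X (-1) ω := by
    intro ω; simpa using hd 0 ω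
  have hdn : ∀ ω, G n ω - G (n - 1) ω = X n ω - a * X (n - 1) ω := hd n
  -- means are zero
  have hmean : ∀ k : ℤ, ∫ ω, (X k ω - a * X (k - 1) ω) ∂(ℙ : Measure Ω) = 0 := by
    intro k
    rw [integral_sub (hint k) ((hint (k - 1)).const_mul a), integral_const_mul, hXc, hXc]
    ring
  -- shifted second moments
  have sh1 : ∫ ω, X (-1) ω * X n ω ∂(ℙ : Measure Ω) = γ (n + 1) := by
    have h := shift_integral X hX hm (-1) 0 (n + 1)
    rw [show (-1 : ℤ) + 0 = -1 by ring, show (-1 : ℤ) + (n + 1) = n by ring] at h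
    rw [h, hγ]
  have sh2 : ∫ ω, X (-1) ω * X (n - 1) ω ∂(ℙ : Measure Ω) = γ n := by
    have h := shift_integral X hX hm (-1) 0 n
    rw [show (-1 : ℤ) + 0 = -1 by ring, show (-1 : ℤ) + n = n - 1 by ring] at h
    rw [h, hγ]
  have sh3 : ∫ ω, X 0 ω * X (n - 1) ω ∂(ℙ : Measure Ω) = γ (n - 1) := (hγ (n - 1)).symm
  have sh4 : ∫ ω, X 0 ω * X n ω ∂(ℙ : Measure Ω) = γ n := (hγ n).symm
  -- expand the product
  have hprod : (∫ ω, (G 0 ω - G (-1) ω) * (G n ω - G (n - 1) ω) ∂(ℙ : Measure Ω)) =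
      γ n - a * γ (n - 1) - a * γ (n + 1) + a ^ 2 * γ n := by
    have e : ∀ ω : Ω, (G 0 ω - G (-1) ω) * (G n ω - G (n - 1) ω) =
        X 0 ω * X n ω - a * (X 0 ω * X (n - 1) ω) - a * (X (-1) ω * X n ω) +
          a ^ 2 * (X (-1) ω * X (n - 1) ω) := by
      intro ω; rw [hd0 ω, hdn ω]; ring
    calc (∫ ω, (G 0 ω - G (-1) ω) * (G n ω - G (n - 1) ω) ∂(ℙ : Measure Ω))
        = ∫ ω, (X 0 ω * X n ω - a * (X 0 ω * X (n - 1) ω) - a * (X (-1) ω * X n ω) +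
            a ^ 2 * (X (-1) ω * X (n - 1) ω)) ∂(ℙ : Measure Ω) := by
          exact integral_congr_ae (Filter.Eventually.of_forall e)
      _ = γ n - a * γ (n - 1) - a * γ (n + 1) + a ^ 2 * γ n := by
          have i2 : Integrable (fun ω => a * (X 0 ω * X (n - 1) ω)) (ℙ : Measure Ω) :=
            (hmul 0 (n - 1)).const_mul a
          have i3 : Integrable (fun ω => a * (X (-1) ω * X n ω)) (ℙ : Measure Ω) :=
            (hmul (-1) n).const_mul a
          have i4 : Integrable (fun ω => a ^ 2 * (X (-1) ω * X (n - 1) ω)) (ℙ : Measure Ω) :=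
            (hmul (-1) (n - 1)).const_mul (a ^ 2)
          have i12 : Integrable
              (fun ω => X 0 ω * X n ω - a * (X 0 ω * X (n - 1) ω)) (ℙ : Measure Ω) :=
            (hmul 0 n).sub i2
          have i123 : Integrable (fun ω => X 0 ω * X n ω - a * (X 0 ω * X (n - 1) ω) -
              a * (X (-1) ω * X n ω)) (ℙ : Measure Ω) := i12.sub i3
          rw [integral_add i123 i4, integral_sub i12 i3, integral_sub (hmul 0 n) i2,
            integral_const_mul, integral_const_mul, integral_const_mul, sh1, sh2, sh3, sh4]
  have hm0 : (∫ ω, (G 0 ω - G (-1) ω) ∂(ℙ : Measure Ω)) = 0 := by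
    rw [integral_congr_ae (Filter.Eventually.of_forall hd0)]; exact hmean 0
  rw [hprod, hm0, zero_mul, sub_zero]
  ring

/-- For a strictly stationary process with everywhere non-vanishing
autocovariance, there is at most one pair `(H, G)` satisfying the AR(1)
(Langevin) equation such that the autocovariance of the increments of `G`
has a finite cut-off. -/
theorem uniqueness_of_pair
    [IsProbabilityMeasure (ℙ : Measure Ω)]
    (X : ℤ → Ω → ℝ) (hX : IsStrictlyStationary X)
    (hX2 : ∀ t : ℤ, MemLp (X t) 2 (ℙ : Measure Ω))
    (hXc : ∀ t : ℤ, ∫ ω, X t ω ∂(ℙ : Measure Ω) = 0)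
    (γ : ℤ → ℝ) (hγ : ∀ n : ℤ, γ n = ∫ ω, X 0 ω * X n ω ∂(ℙ : Measure Ω))
    (hγne : ∀ n : ℤ, γ n ≠ 0)
    (H₁ H₂ : ℝ) (hH₁ : 0 < H₁) (hH₂ : 0 < H₂)
    (G₁ G₂ : ℤ → Ω → ℝ) (hG₁ : InClassG H₁ G₁) (hG₂ : InClassG H₂ G₂)
    (heq₁ : ∀ (t : ℤ) (ω : Ω),
      X t ω - X (t - 1) ω =
        (Real.exp (-H₁) - 1) * X (t - 1) ω + (G₁ t ω - G₁ (t - 1) ω))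
    (heq₂ : ∀ (t : ℤ) (ω : Ω),
      X t ω - X (t - 1) ω =
        (Real.exp (-H₂) - 1) * X (t - 1) ω + (G₂ t ω - G₂ (t - 1) ω))
    (r₁ r₂ : ℤ → ℝ)
    (hr₁ : ∀ n : ℤ, r₁ n =
      (∫ ω, (G₁ 0 ω - G₁ (-1) ω) * (G₁ n ω - G₁ (n - 1) ω) ∂(ℙ : Measure Ω)) -
        (∫ ω, (G₁ 0 ω - G₁ (-1) ω) ∂(ℙ : Measure Ω)) *
          (∫ ω, (G₁ n ω - G₁ (n - 1) ω) ∂(ℙ : Measure Ω)))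
    (hr₂ : ∀ n : ℤ, r₂ n =
      (∫ ω, (G₂ 0 ω - G₂ (-1) ω) * (G₂ n ω - G₂ (n - 1) ω) ∂(ℙ : Measure Ω)) -
        (∫ ω, (G₂ 0 ω - G₂ (-1) ω) ∂(ℙ : Measure Ω)) *
          (∫ ω, (G₂ n ω - G₂ (n - 1) ω) ∂(ℙ : Measure Ω)))
    (hcut₁ : ∃ N₁ : ℤ, ∀ m : ℤ, N₁ ≤ m → r₁ m = 0)
    (hcut₂ : ∃ N₂ : ℤ, ∀ m : ℤ, N₂ ≤ m → r₂ m = 0) :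
    H₁ = H₂ ∧ ∀ t : ℤ, G₁ t = G₂ t := by
  -- increments in terms of X
  set a := Real.exp (-H₁) with ha
  set b := Real.exp (-H₂) with hb
  have hd₁ : ∀ (t : ℤ) (ω : Ω), G₁ t ω - G₁ (t - 1) ω = X t ω - a * X (t - 1) ω := by
    intro t ω; have := heq₁ t ω; linarith
  have hd₂ : ∀ (t : ℤ) (ω : Ω), G₂ t ω - G₂ (t - 1) ω = X t ω - b * X (t - 1) ω := by
    intro t ω; have := heq₂ t ω; linarith
  obtain ⟨N₁, hN₁⟩ := hcut₁
  obtain ⟨N₂, hN₂⟩ := hcut₂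
  set m := max N₁ N₂ with hm
  have h₁ : (1 + a ^ 2) * γ m - a * (γ (m + 1) + γ (m - 1)) = 0 := by
    rw [← cov_incr X hX hX2 hXc γ hγ a G₁ hd₁ m, ← hr₁ m]
    exact hN₁ m (le_max_left _ _)
  have h₂ : (1 + b ^ 2) * γ m - b * (γ (m + 1) + γ (m - 1)) = 0 := by
    rw [← cov_incr X hX hX2 hXc γ hγ b G₂ hd₂ m, ← hr₂ m]
    exact hN₂ m (le_max_right _ _)
  have ha1 : a < 1 := Real.exp_lt_one_iff.mpr (by linarith)
  have hb1 : b < 1 := Real.exp_lt_one_iff.mpr (by linarith)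
  have ha0 : 0 < a := Real.exp_pos _
  have hb0 : 0 < b := Real.exp_pos _
  have hkey : (b - a) * ((1 - a * b) * γ m) = 0 := by linear_combination b * h₁ - a * h₂
  have hab : a = b := by
    rcases mul_eq_zero.mp hkey with h | h
    · linarith [sub_eq_zero.mp h]
    · rcases mul_eq_zero.mp h with h' | h'
      · nlinarith
      · exact absurd h' (hγne m)
  have hH : H₁ = H₂ := by
    have hexp : Real.exp (-H₁) = Real.exp (-H₂) := by rw [← ha, ← hb]; exact hab
    have := Real.exp_injective hexp
    linarith
  refine ⟨hH, ?_⟩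
  have hdiff : ∀ (t : ℤ) (ω : Ω), G₁ t ω - G₁ (t - 1) ω = G₂ t ω - G₂ (t - 1) ω := by
    intro t ω; rw [hd₁ t ω, hd₂ t ω, hab]
  intro t
  induction t using Int.induction_on with
  | zero => funext ω; rw [hG₁.1 ω, hG₂.1 ω]
  | succ i ih =>
      funext ω
      have h := hdiff (i + 1) ω
      rw [show (i : ℤ) + 1 - 1 = i by ring] at h
      have := congrFun ih ω
      linarith
  | pred i ih =>
      funext ω
      have h := hdiff (-(i : ℤ)) ω
      have := congrFun ih ω
      linarith
end

section
/- Define g(x₁, x₂, x₃) = (x₁ + x₃)² − 4x₂(x₂ − r(N)) and write γ = (γ(N+1), γ(N), γ(N−1)). Assume γ(N) ≠ 0, g(γ) > 0, and φ = [γ(N+1) + γ(N−1) + √(g(γ))]/(2γ(N)). Let φ̂_T be the truncation to [0,1] of [γ̂_T(N+1) + γ̂_T(N−1) + √(g(γ̂_T))·1{g(γ̂_T) > 0}]/(2γ̂_T(N)) · 1{γ̂_T(N) ≠ 0}, where γ̂_T = (γ̂_T(N+1), γ̂_T(N), γ̂_T(N−1)). Suppose there is a function l(T) → ∞ and a 3×3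 covariance matrix Σ such that l(T)(γ̂_T − γ) converges in distribution to the trivariate normal N(0, Σ). Then l(T)(φ̂_T − φ) converges in distribution to N(0, Σ_φ), where, with C_N = [γ(N+1) + γ(N−1) + √(g(γ))]/γ(N), v = (1, −C_N, 1)ᵀ, and w = ∇√(g(γ)) = (1/√(g(γ)))·(γ(N+1)+γ(N−1), 2(r(N) − 2γ(N)), γ(N+1)+γ(N−1))ᵀ, Σ_φ = (1/(4γ(N)²))·(wᵀΣw + 2vᵀΣw + vᵀΣv). -/
open MeasureTheory ProbabilityTheory Filter

variable {Ω : Type*} [MeasureSpace Ω]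

/-- Convergence in distribution: weak convergence of the laws, tested against
bounded continuous functions. -/
def ConvInDist {E : Type*} [TopologicalSpace E] [MeasurableSpace E]
    (f : ℕ → Ω → E) (μ : Measure E) : Prop :=
  ∀ g : BoundedContinuousFunction E ℝ,
    Tendsto (fun T => ∫ ω, g (f T ω) ∂(ℙ : Measure Ω)) atTop
      (nhds (∫ x, g x ∂μ))

/-- A measure on `Fin n → ℝ` is the centered Gaussian with covariance matrix `S`
iff every linear functional pushes it to the corresponding real Gaussian. -/
def IsCenteredGaussianWithCov {n : ℕ} (μ : Measure (Fin n → ℝ))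
    (S : Matrix (Fin n) (Fin n) ℝ) : Prop :=
  ∀ a : Fin n → ℝ,
    μ.map (fun x => ∑ i, a i * x i) =
      gaussianReal 0 (∑ i, ∑ j, a i * S i j * a j).toNNReal


noncomputable def hfun (rN : ℝ) (x : Fin 3 → ℝ) : ℝ :=
  max 0 (min 1
    (if x 1 ≠ 0 then
      (x 0 + x 2 +
        (if (x 0 + x 2) ^ 2 - 4 * x 1 * (x 1 - rN) > 0 then
          Real.sqrt ((x 0 + x 2) ^ 2 - 4 * x 1 * (x 1 - rN))
        else 0)) / (2 * x 1)
    else 0))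

lemma hfun_measurable (rN : ℝ) : Measurable (hfun rN) := by
  have hq : Measurable (fun x : Fin 3 → ℝ => (x 0 + x 2) ^ 2 - 4 * x 1 * (x 1 - rN)) := by
    fun_prop
  have hsq : Measurable (fun x : Fin 3 → ℝ =>
      (if (x 0 + x 2) ^ 2 - 4 * x 1 * (x 1 - rN) > 0 then
        Real.sqrt ((x 0 + x 2) ^ 2 - 4 * x 1 * (x 1 - rN)) else 0)) := by
    exact Measurable.ite (measurableSet_lt measurable_const hq)
      ((Real.continuous_sqrt.measurable).comp hq) measurable_const
  have hnum : Measurable (fun x : Fin 3 → ℝ => x 0 + x 2 +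
      (if (x 0 + x 2) ^ 2 - 4 * x 1 * (x 1 - rN) > 0 then
        Real.sqrt ((x 0 + x 2) ^ 2 - 4 * x 1 * (x 1 - rN)) else 0)) :=
    ((measurable_pi_apply 0).add (measurable_pi_apply 2)).add hsq
  have hratio : Measurable (fun x : Fin 3 → ℝ => (x 0 + x 2 +
      (if (x 0 + x 2) ^ 2 - 4 * x 1 * (x 1 - rN) > 0 then
        Real.sqrt ((x 0 + x 2) ^ 2 - 4 * x 1 * (x 1 - rN)) else 0)) / (2 * x 1)) :=
    hnum.div (measurable_const.mul (measurable_pi_apply 1))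
  have hset : MeasurableSet {x : Fin 3 → ℝ | x 1 ≠ 0} := by
    have : {x : Fin 3 → ℝ | x 1 ≠ 0} = (fun x : Fin 3 → ℝ => x 1) ⁻¹' ({0}ᶜ) := rfl
    rw [this]
    exact (measurable_pi_apply 1) (measurableSet_singleton (0:ℝ)).compl
  exact measurable_const.max (measurable_const.min (Measurable.ite hset hratio measurable_const))

lemma hfun_key (rN γ1 γ2 γ3 φ : ℝ) (hγ2 : γ2 ≠ 0)
    (hg : 0 < (γ1 + γ3) ^ 2 - 4 * γ2 * (γ2 - rN))
    (hφval : φ = (γ1 + γ3 + Real.sqrt ((γ1 + γ3) ^ 2 - 4 * γ2 * (γ2 - rN))) / (2 * γ2))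
    (hφIoo : φ ∈ Set.Ioo (0:ℝ) 1)
    (a : Fin 3 → ℝ)
    (ha0 : a 0 = (1 + (γ1 + γ3) / Real.sqrt ((γ1 + γ3) ^ 2 - 4 * γ2 * (γ2 - rN))) / (2 * γ2))
    (ha1 : a 1 = (2 * (rN - 2 * γ2) / Real.sqrt ((γ1 + γ3) ^ 2 - 4 * γ2 * (γ2 - rN)) -
        (γ1 + γ3 + Real.sqrt ((γ1 + γ3) ^ 2 - 4 * γ2 * (γ2 - rN))) / γ2) / (2 * γ2))
    (ha2 : a 2 = (1 + (γ1 + γ3) / Real.sqrt ((γ1 + γ3) ^ 2 - 4 * γ2 * (γ2 - rN))) / (2 * γ2)) :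
    ∀ ε > 0, ∃ δ > 0, ∀ u : Fin 3 → ℝ, ‖u‖ ≤ δ →
      |hfun rN (![γ1, γ2, γ3] + u) - φ - ∑ i, a i * u i| ≤ ε * ‖u‖ := by
  set G : ℝ := (γ1 + γ3) ^ 2 - 4 * γ2 * (γ2 - rN) with hG
  set s : ℝ := Real.sqrt G with hs
  have hspos : 0 < s := Real.sqrt_pos.mpr hg
  have hsne : s ≠ 0 := ne_of_gt hspos
  set γv : Fin 3 → ℝ := ![γ1, γ2, γ3] with hγv
  have hγv0 : γv 0 = γ1 := rfl
  have hγv1 : γv 1 = γ2 := rfl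
  have hγv2 : γv 2 = γ3 := rfl
  set q : (Fin 3 → ℝ) → ℝ := fun x => (x 0 + x 2) ^ 2 - 4 * x 1 * (x 1 - rN) with hqdef
  have hqγ : q γv = G := by simp [q, hγv0, hγv1, hγv2, hG]
  -- continuity of q
  have hqcont : Continuous q := by fun_prop
  -- derivative of coordinates
  have h0 : HasFDerivAt (fun x : Fin 3 → ℝ => x 0) ((ContinuousLinearMap.proj 0 : (Fin 3 → ℝ) →L[ℝ] ℝ)) γv :=
    hasFDerivAt_apply 0 γv
  have h1 : HasFDerivAt (fun x : Fin 3 → ℝ => x 1) ((ContinuousLinearMap.proj 1 : (Fin 3 → ℝ) →L[ℝ] ℝ)) γv :=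
    hasFDerivAt_apply 1 γv
  have h2 : HasFDerivAt (fun x : Fin 3 → ℝ => x 2) ((ContinuousLinearMap.proj 2 : (Fin 3 → ℝ) →L[ℝ] ℝ)) γv :=
    hasFDerivAt_apply 2 γv
  have hsum := h0.add h2
  set p0 : (Fin 3 → ℝ) →L[ℝ] ℝ := ContinuousLinearMap.proj 0 with hp0
  set p1 : (Fin 3 → ℝ) →L[ℝ] ℝ := ContinuousLinearMap.proj 1 with hp1
  set p2 : (Fin 3 → ℝ) →L[ℝ] ℝ := ContinuousLinearMap.proj 2 with hp2
  set Dq : (Fin 3 → ℝ) →L[ℝ] ℝ :=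
    ((γ1 + γ3) • (p0 + p2) + (γ1 + γ3) • (p0 + p2)) -
      ((4 * γ2) • p1 + (γ2 - rN) • ((4:ℝ) • p1)) with hDq
  have hqd : HasFDerivAt q Dq γv := by
    have heq : q = fun x : Fin 3 → ℝ =>
        (x 0 + x 2) * (x 0 + x 2) - 4 * x 1 * (x 1 - rN) := by
      funext x; simp only [q]; ring
    rw [heq]
    exact (hsum.mul hsum).sub ((h1.const_mul (4:ℝ)).mul (h1.sub_const rN))
  have hqγne : q γv ≠ 0 := by rw [hqγ]; exact ne_of_gt hg
  have hsqrt : HasFDerivAt (fun x => Real.sqrt (q x)) ((1 / (2 * s)) • Dq) γv :=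
    (Real.hasDerivAt_sqrt hqγne).comp_hasFDerivAt γv hqd
  have hnum : HasFDerivAt (fun x : Fin 3 → ℝ => x 0 + x 2 + Real.sqrt (q x))
      ((p0 + p2) + (1 / (2 * s)) • Dq) γv := hsum.add hsqrt
  have hdenne : 2 * γv 1 ≠ 0 := by rw [hγv1]; exact mul_ne_zero two_ne_zero hγ2
  have hinv : HasFDerivAt (fun x : Fin 3 → ℝ => (2 * x 1)⁻¹)
      ((-((2 * γ2) ^ 2)⁻¹) • ((2:ℝ) • p1)) γv :=
    (hasDerivAt_inv hdenne).comp_hasFDerivAt γv (h1.const_mul (2:ℝ))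
  set D : (Fin 3 → ℝ) →L[ℝ] ℝ :=
    (γ1 + γ3 + s) • ((-((2 * γ2) ^ 2)⁻¹) • ((2:ℝ) • p1)) +
      ((2 * γ2)⁻¹) • ((p0 + p2) + (1 / (2 * s)) • Dq) with hD
  have hmul : HasFDerivAt
      (fun x : Fin 3 → ℝ => (x 0 + x 2 + Real.sqrt (q x)) * (2 * x 1)⁻¹) D γv :=
    hnum.mul hinv
  have hDu : ∀ u : Fin 3 → ℝ, D u = ∑ i, a i * u i := by
    intro u
    rw [Fin.sum_univ_three, ha0, ha1, ha2]
    simp only [hD, hDq, hp0, hp1, hp2, ContinuousLinearMap.add_apply,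
      ContinuousLinearMap.coe_smul', Pi.smul_apply, ContinuousLinearMap.proj_apply,
      ContinuousLinearMap.sub_apply, smul_eq_mul, ← hs]
    field_simp
    ring
  set hsfn : (Fin 3 → ℝ) → ℝ :=
    fun x => (x 0 + x 2 + Real.sqrt (q x)) * (2 * x 1)⁻¹ with hhsfn
  have ev1 : ∀ᶠ x : Fin 3 → ℝ in nhds γv, x 1 ≠ 0 :=
    (continuous_apply 1).continuousAt.eventually_ne (by rw [hγv1]; exact hγ2)
  have ev2 : ∀ᶠ x : Fin 3 → ℝ in nhds γv, 0 < q x :=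
    hqcont.continuousAt.eventually (eventually_gt_nhds (by rw [hqγ]; exact hg))
  have hsγ : hsfn γv = φ := by
    simp only [hhsfn, hγv0, hγv1, hγv2, hqγ, ← hs, hφval, div_eq_mul_inv]
  have hscont : ContinuousAt hsfn γv := by
    apply ContinuousAt.mul
    · exact (((continuous_apply 0).add (continuous_apply 2)).continuousAt).add
        (Real.continuous_sqrt.continuousAt.comp hqcont.continuousAt)
    · exact ContinuousAt.inv₀ (continuous_const.mul (continuous_apply 1)).continuousAt hdenne
  have ev3 : ∀ᶠ x : Fin 3 → ℝ in nhds γv, hsfn x ∈ Set.Ioo (0:ℝ) 1 :=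
    hscont.eventually_mem (by rw [hsγ]; exact isOpen_Ioo.mem_nhds hφIoo)
  have heq : hfun rN =ᶠ[nhds γv] hsfn := by
    filter_upwards [ev1, ev2, ev3] with x hx1 hx2 hx3
    have hq' : (x 0 + x 2) ^ 2 - 4 * x 1 * (x 1 - rN) > 0 := hx2
    rw [hfun, if_pos hx1, if_pos hq']
    have : (x 0 + x 2 + Real.sqrt ((x 0 + x 2) ^ 2 - 4 * x 1 * (x 1 - rN))) / (2 * x 1)
        = hsfn x := by rw [hhsfn, div_eq_mul_inv]
    rw [this, min_eq_right (le_of_lt hx3.2), max_eq_right (le_of_lt hx3.1)]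
  have H : HasFDerivAt (hfun rN) D γv := heq.hasFDerivAt_iff.mpr hmul
  have hfγ : hfun rN γv = φ := by rw [heq.eq_of_nhds, hsγ]
  intro ε hε
  have hlo := hasFDerivAt_iff_isLittleO_nhds_zero.mp H
  have hev := hlo.def hε
  rw [Metric.eventually_nhds_iff] at hev
  obtain ⟨δ, hδpos, hδ⟩ := hev
  refine ⟨δ / 2, by positivity, fun u hu => ?_⟩
  have : dist u 0 < δ := by
    rw [dist_zero_right]; linarith
  have h2 := hδ this
  rw [hfγ, hDu u] at h2
  simpa [Real.norm_eq_abs] using h2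

lemma exists_cutoff (μ : Measure (Fin 3 → ℝ)) [IsProbabilityMeasure μ]
    (ε : ℝ) (hε : 0 < ε) :
    ∃ R : ℝ, 0 ≤ R ∧ ∫ y, min 1 (max 0 (‖y‖ - R)) ∂μ ≤ ε := by
  have hcont : ∀ c : ℝ, Continuous (fun y : Fin 3 → ℝ => min 1 (max 0 (‖y‖ - c))) :=
    fun c => continuous_const.min (continuous_const.max (continuous_norm.sub continuous_const))
  have hDCT : Tendsto (fun n : ℕ => ∫ y, min 1 (max 0 (‖y‖ - n)) ∂μ) atTop
      (nhds (∫ _ : Fin 3 → ℝ, (0:ℝ) ∂μ)) := by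
    apply tendsto_integral_of_dominated_convergence (bound := fun _ => (1:ℝ))
    · exact fun n => ((hcont n).aestronglyMeasurable)
    · exact integrable_const 1
    · intro n
      refine Filter.Eventually.of_forall fun y => ?_
      rw [Real.norm_eq_abs, abs_le]
      constructor
      · have : (0:ℝ) ≤ max 0 (‖y‖ - n) := le_max_left 0 _
        have : (0:ℝ) ≤ min 1 (max 0 (‖y‖ - n)) := le_min one_pos.le this
        linarith
      · exact min_le_left _ _
    · refine Filter.Eventually.of_forall fun y => ?_
      refine tendsto_const_nhds.congr' (eventually_atTop.mpr ⟨⌈‖y‖⌉₊, fun n hn => ?_⟩)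
      have : ‖y‖ - n ≤ 0 := by
        have h1 : ‖y‖ ≤ (⌈‖y‖⌉₊ : ℝ) := Nat.le_ceil _
        have h2 : ((⌈‖y‖⌉₊ : ℕ) : ℝ) ≤ (n : ℝ) := Nat.cast_le.mpr hn
        linarith
      simp only []
      rw [max_eq_left this]
      simp
  rw [integral_zero] at hDCT
  have := (hDCT.eventually (eventually_le_nhds hε)).exists
  obtain ⟨n, hn⟩ := this
  exact ⟨n, Nat.cast_nonneg n, hn⟩

lemma extract_aemeasurable [IsProbabilityMeasure (ℙ : Measure Ω)]
    {n : ℕ} (f : ℕ → Ω → (Fin n → ℝ)) (μ : Measure (Fin n → ℝ))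
    [IsProbabilityMeasure μ] (hconv : ConvInDist f μ) (i : Fin n) :
    ∀ᶠ T in atTop, AEMeasurable (fun ω => f T ω i) (ℙ : Measure Ω) := by
  set B : BoundedContinuousFunction (Fin n → ℝ) ℝ :=
    BoundedContinuousFunction.ofNormedAddCommGroup
      (fun y => y i / (1 + |y i|) + 10)
      (by
        refine Continuous.add ?_ continuous_const
        refine Continuous.div (continuous_apply i)
          (continuous_const.add (continuous_apply i).abs) (fun y => ?_)
        positivity)
      11
      (by
        intro y
        have h1 : |y i / (1 + |y i|)| ≤ 1 := by
          rw [abs_div]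
          rw [div_le_one (by positivity)]
          rw [abs_of_pos (by positivity : (0:ℝ) < 1 + |y i|)]
          linarith [abs_nonneg (y i)]
        have := abs_add_le (y i / (1 + |y i|)) 10
        rw [Real.norm_eq_abs]
        simp only [abs_of_pos (by norm_num : (0:ℝ) < 10)] at this ⊢
        linarith) with hB
  have hBcoe : ∀ y, B y = y i / (1 + |y i|) + 10 := fun y => rfl
  have hBge : ∀ y, (9:ℝ) ≤ B y := by
    intro y
    rw [hBcoe]
    have h1 : -1 ≤ y i / (1 + |y i|) := by
      rw [neg_le, ← neg_div]
      rw [div_le_one (by positivity)]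
      linarith [neg_abs_le (y i), abs_nonneg (y i)]
    linarith
  have hBint : (9:ℝ) ≤ ∫ x, B x ∂μ := by
    have := integral_mono (integrable_const (9:ℝ)) (B.integrable μ) hBge
    simpa using this
  have := (hconv B).eventually (eventually_gt_nhds (by linarith : (0:ℝ) < ∫ x, B x ∂μ))
  filter_upwards [this] with T hT
  have hne : ∫ ω, B (f T ω) ∂(ℙ : Measure Ω) ≠ 0 := ne_of_gt hT
  have hint : Integrable (fun ω => B (f T ω)) (ℙ : Measure Ω) := by
    by_contra hc
    exact hne (integral_undef hc)
  have haesm : AEMeasurable (fun ω => B (f T ω)) (ℙ : Measure Ω) :=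
    hint.aestronglyMeasurable.aemeasurable
  have hu : AEMeasurable (fun ω => f T ω i / (1 + |f T ω i|)) (ℙ : Measure Ω) := by
    have : (fun ω => f T ω i / (1 + |f T ω i|)) =
        fun ω => B (f T ω) - 10 := by
      funext ω; rw [hBcoe]; ring
    rw [this]
    exact haesm.sub aemeasurable_const
  have hψ : Measurable (fun t : ℝ => t / (1 - |t|)) :=
    measurable_id.div (measurable_const.sub measurable_abs)
  have hcomp : AEMeasurable ((fun t : ℝ => t / (1 - |t|)) ∘
      (fun ω => f T ω i / (1 + |f T ω i|))) (ℙ : Measure Ω) :=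
    hψ.comp_aemeasurable hu
  refine hcomp.congr (Filter.Eventually.of_forall fun ω => ?_)
  show (fun t : ℝ => t / (1 - |t|)) (f T ω i / (1 + |f T ω i|)) = f T ω i
  set c := f T ω i
  have h1 : (0:ℝ) < 1 + |c| := by positivity
  have h2 : |c / (1 + |c|)| = |c| / (1 + |c|) := by
    rw [abs_div, abs_of_pos h1]
  simp only [h2]
  have h3 : 1 - |c| / (1 + |c|) = 1 / (1 + |c|) := by
    field_simp
    ring
  rw [h3]
  field_simp

set_option maxHeartbeats 2000000 in
/-- Asymptotic normality of the estimator `φ̂_T` in the case `γ(N) ≠ 0`,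
`g(γ) > 0`, where `g(x₁,x₂,x₃) = (x₁+x₃)² - 4x₂(x₂ - r(N))`. -/
theorem estimator_asymptotically_normal_general_case
    [IsProbabilityMeasure (ℙ : Measure Ω)]
    (X Z : ℤ → Ω → ℝ) (φ : ℝ) (hφ : φ ∈ Set.Ioo (0 : ℝ) 1)
    (hX2 : ∀ t : ℤ, MemLp (X t) 2 (ℙ : Measure Ω))
    (hZ2 : ∀ t : ℤ, MemLp (Z t) 2 (ℙ : Measure Ω))
    (hXc : ∀ t : ℤ, ∫ ω, X t ω ∂(ℙ : Measure Ω) = 0)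
    (hZc : ∀ t : ℤ, ∫ ω, Z t ω ∂(ℙ : Measure Ω) = 0)
    (hAR : ∀ (t : ℤ) (ω : Ω), X t ω - φ * X (t - 1) ω = Z t ω)
    (γ r : ℤ → ℝ)
    (hγ : ∀ t n : ℤ, γ n = ∫ ω, X t ω * X (t + n) ω ∂(ℙ : Measure Ω))
    (hr : ∀ t n : ℤ, r n = ∫ ω, Z t ω * Z (t + n) ω ∂(ℙ : Measure Ω))
    (N : ℕ) (hγN : γ (N : ℤ) ≠ 0)
    (hgpos : (γ ((N : ℤ) + 1) + γ ((N : ℤ) - 1)) ^ 2 -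
        4 * γ (N : ℤ) * (γ (N : ℤ) - r (N : ℤ)) > 0)
    (hphi : φ = (γ ((N : ℤ) + 1) + γ ((N : ℤ) - 1) +
        Real.sqrt ((γ ((N : ℤ) + 1) + γ ((N : ℤ) - 1)) ^ 2 -
          4 * γ (N : ℤ) * (γ (N : ℤ) - r (N : ℤ)))) / (2 * γ (N : ℤ)))
    (g1 g2 g3 : ℕ → Ω → ℝ)
    (φhat : ℕ → Ω → ℝ)
    (hφhat : ∀ (T : ℕ) (ω : Ω),
      φhat T ω = max 0 (min 1
        (if g2 T ω ≠ 0 then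
          (g1 T ω + g3 T ω +
            (if (g1 T ω + g3 T ω) ^ 2 - 4 * g2 T ω * (g2 T ω - r (N : ℤ)) > 0 then
              Real.sqrt ((g1 T ω + g3 T ω) ^ 2 - 4 * g2 T ω * (g2 T ω - r (N : ℤ)))
            else 0)) / (2 * g2 T ω)
        else 0)))
    (l : ℕ → ℝ) (hl : Tendsto l atTop atTop)
    (S : Matrix (Fin 3) (Fin 3) ℝ) (hS : S.PosSemidef)
    (μ : Measure (Fin 3 → ℝ)) (hμprob : IsProbabilityMeasure μ)
    (hμgauss : IsCenteredGaussianWithCov μ S)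
    (hconv : ConvInDist
      (fun T ω => ![l T * (g1 T ω - γ ((N : ℤ) + 1)),
                    l T * (g2 T ω - γ (N : ℤ)),
                    l T * (g3 T ω - γ ((N : ℤ) - 1))]) μ)
    (C : ℝ) (hC : C = (γ ((N : ℤ) + 1) + γ ((N : ℤ) - 1) +
        Real.sqrt ((γ ((N : ℤ) + 1) + γ ((N : ℤ) - 1)) ^ 2 -
          4 * γ (N : ℤ) * (γ (N : ℤ) - r (N : ℤ)))) / γ (N : ℤ))
    (v w : Fin 3 → ℝ) (hv : v = ![1, -C, 1])
    (hw : w = (Real.sqrt ((γ ((N : ℤ) + 1) + γ ((N : ℤ) - 1)) ^ 2 -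
          4 * γ (N : ℤ) * (γ (N : ℤ) - r (N : ℤ))))⁻¹ •
        ![γ ((N : ℤ) + 1) + γ ((N : ℤ) - 1),
          2 * (r (N : ℤ) - 2 * γ (N : ℤ)),
          γ ((N : ℤ) + 1) + γ ((N : ℤ) - 1)])
    (Sphi : ℝ) (hSphi : Sphi = (1 / (4 * γ (N : ℤ) ^ 2)) *
        ((∑ i, ∑ j, w i * S i j * w j) + 2 * (∑ i, ∑ j, v i * S i j * w j) +
          ∑ i, ∑ j, v i * S i j * v j)) :
    ConvInDist (fun T ω => l T * (φhat T ω - φ)) (gaussianReal 0 Sphi.toNNReal) := by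
  classical
  intro gtest
  set γ1 : ℝ := γ ((N : ℤ) + 1) with hγ1def
  set γ2 : ℝ := γ (N : ℤ) with hγ2def
  set γ3 : ℝ := γ ((N : ℤ) - 1) with hγ3def
  set rN : ℝ := r (N : ℤ) with hrNdef
  clear_value γ1 γ2 γ3 rN
  -- the gradient vector
  set a : Fin 3 → ℝ := fun i => (v i + w i) / (2 * γ2) with hadef
  clear_value a
  have hv0 : v 0 = 1 := by rw [hv]; rfl
  have hv1 : v 1 = -C := by rw [hv]; rfl
  have hv2 : v 2 = 1 := by rw [hv]; rfl
  have hw0 : w 0 = (Real.sqrt ((γ1 + γ3) ^ 2 - 4 * γ2 * (γ2 - rN)))⁻¹ * (γ1 + γ3) := by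
    rw [hw]; simp only [Pi.smul_apply, Matrix.cons_val_zero, smul_eq_mul]
  have hw1 : w 1 = (Real.sqrt ((γ1 + γ3) ^ 2 - 4 * γ2 * (γ2 - rN)))⁻¹ *
      (2 * (rN - 2 * γ2)) := by
    rw [hw]; simp only [Pi.smul_apply, Matrix.cons_val_one, Matrix.head_cons, smul_eq_mul,
      Matrix.cons_val_zero]
  have hw2 : w 2 = (Real.sqrt ((γ1 + γ3) ^ 2 - 4 * γ2 * (γ2 - rN)))⁻¹ * (γ1 + γ3) := by
    rw [hw]; simp only [Pi.smul_apply, smul_eq_mul]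
    congr 1
  have ha0 : a 0 = (1 + (γ1 + γ3) / Real.sqrt ((γ1 + γ3) ^ 2 - 4 * γ2 * (γ2 - rN))) /
      (2 * γ2) := by
    rw [hadef]; simp only []; rw [hv0, hw0, inv_mul_eq_div]
  have ha1 : a 1 = (2 * (rN - 2 * γ2) / Real.sqrt ((γ1 + γ3) ^ 2 - 4 * γ2 * (γ2 - rN)) -
      (γ1 + γ3 + Real.sqrt ((γ1 + γ3) ^ 2 - 4 * γ2 * (γ2 - rN))) / γ2) / (2 * γ2) := by
    rw [hadef]; simp only []; rw [hv1, hw1, hC, inv_mul_eq_div]; ring_nf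
  have ha2 : a 2 = (1 + (γ1 + γ3) / Real.sqrt ((γ1 + γ3) ^ 2 - 4 * γ2 * (γ2 - rN))) /
      (2 * γ2) := by
    rw [hadef]; simp only []; rw [hv2, hw2, inv_mul_eq_div]
  have hsymm : ∀ i j, S j i = S i j := fun i j => by
    have := hS.1.apply i j
    simpa using this
  have hSum : (∑ i, ∑ j, a i * S i j * a j) = Sphi := by
    rw [hSphi, hadef]
    simp only [Fin.sum_univ_three]
    rw [hsymm 0 1, hsymm 0 2, hsymm 1 2]
    field_simp
    ring
  have hA'cont : Continuous (fun y : Fin 3 → ℝ => ∑ i, a i * y i) :=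
    continuous_finset_sum _ fun i _ => continuous_const.mul (continuous_apply i)
  have hmap := hμgauss a
  rw [hSum] at hmap
  have hL : ∫ y, gtest (∑ i, a i * y i) ∂μ =
      ∫ x, gtest x ∂(gaussianReal 0 Sphi.toNNReal) := by
    rw [← hmap, integral_map hA'cont.aemeasurable gtest.continuous.aestronglyMeasurable]
  set Gtest : BoundedContinuousFunction (Fin 3 → ℝ) ℝ :=
    gtest.compContinuous ⟨fun y : Fin 3 → ℝ => ∑ i, a i * y i, hA'cont⟩ with hGtestdef
  have hGtestx : ∀ y : Fin 3 → ℝ, Gtest y = gtest (∑ i, a i * y i) := fun _ => rfl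
  clear_value Gtest
  have hconvG := hconv Gtest
  have hGlim : ∫ x, Gtest x ∂μ = ∫ x, gtest x ∂(gaussianReal 0 Sphi.toNNReal) := by
    simp only [hGtestx]; exact hL
  rw [hGlim] at hconvG
  -- bound on gtest
  set M : ℝ := ‖gtest‖ with hMdef
  have hM0 : 0 ≤ M := norm_nonneg _
  have hMb : ∀ t : ℝ, |gtest t| ≤ M := fun t => by
    have := gtest.norm_coe_le_norm t
    rw [hMdef]
    rwa [Real.norm_eq_abs] at this
  clear_value M
  rw [Metric.tendsto_nhds]
  intro ε hε
  set ε₁ : ℝ := ε / (4 * M + 5) with hε₁def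
  have hε₁pos : 0 < ε₁ := div_pos hε (by linarith)
  clear_value ε₁
  have h5 : (0:ℝ) < 4 * M + 5 := by linarith
  have heq5 : (4 * M + 5) * ε₁ = ε := by
    rw [hε₁def]; field_simp
  have hε₁ε : (4 * M + 2) * ε₁ < ε := by
    have h6 := mul_lt_mul_of_pos_right (show (4 * M + 2) < 4 * M + 5 by linarith) hε₁pos
    linarith
  -- choose the cutoff radius
  obtain ⟨R, hR0, hRint⟩ := exists_cutoff μ ε₁ hε₁pos
  set R' : ℝ := R + 1 with hR'def
  clear_value R'
  have hR'1 : (1:ℝ) ≤ R' := by rw [hR'def]; linarith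
  have hR'pos : (0:ℝ) < R' := by linarith
  -- cutoff test function
  set χ : BoundedContinuousFunction (Fin 3 → ℝ) ℝ :=
    BoundedContinuousFunction.ofNormedAddCommGroup
      (fun y => min 1 (max 0 (‖y‖ - R)))
      (continuous_const.min (continuous_const.max (continuous_norm.sub continuous_const)))
      1
      (fun y => by
        rw [Real.norm_eq_abs, abs_le]
        refine ⟨?_, min_le_left _ _⟩
        have h0 : (0:ℝ) ≤ max 0 (‖y‖ - R) := le_max_left 0 _
        have := le_min one_pos.le h0
        linarith) with hχdef
  have hχcoe : ∀ y : Fin 3 → ℝ, χ y = min 1 (max 0 (‖y‖ - R)) := fun _ => rfl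
  have hχ0 : ∀ y : Fin 3 → ℝ, 0 ≤ χ y := fun y => by
    rw [hχcoe]; exact le_min one_pos.le (le_max_left 0 _)
  clear_value χ
  have hχμ : ∫ x, χ x ∂μ ≤ ε₁ := by
    simp only [hχcoe]; exact hRint
  -- linear functional bound
  set Ka : ℝ := |a 0| + |a 1| + |a 2| with hKadef
  clear_value Ka
  have hKa0 : 0 ≤ Ka := by
    rw [hKadef]
    exact add_nonneg (add_nonneg (abs_nonneg _) (abs_nonneg _)) (abs_nonneg _)
  have hA'b : ∀ y : Fin 3 → ℝ, |∑ i, a i * y i| ≤ Ka * ‖y‖ := by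
    intro y
    rw [Fin.sum_univ_three, hKadef]
    have b0 : |a 0 * y 0| ≤ |a 0| * ‖y‖ := by
      rw [abs_mul]
      exact mul_le_mul_of_nonneg_left (by
        rw [← Real.norm_eq_abs]; exact norm_le_pi_norm y 0) (abs_nonneg _)
    have b1 : |a 1 * y 1| ≤ |a 1| * ‖y‖ := by
      rw [abs_mul]
      exact mul_le_mul_of_nonneg_left (by
        rw [← Real.norm_eq_abs]; exact norm_le_pi_norm y 1) (abs_nonneg _)
    have b2 : |a 2 * y 2| ≤ |a 2| * ‖y‖ := by
      rw [abs_mul]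
      exact mul_le_mul_of_nonneg_left (by
        rw [← Real.norm_eq_abs]; exact norm_le_pi_norm y 2) (abs_nonneg _)
    calc |a 0 * y 0 + a 1 * y 1 + a 2 * y 2|
        ≤ |a 0 * y 0 + a 1 * y 1| + |a 2 * y 2| := abs_add_le _ _
      _ ≤ |a 0 * y 0| + |a 1 * y 1| + |a 2 * y 2| := by
          have := abs_add_le (a 0 * y 0) (a 1 * y 1); linarith
      _ ≤ (|a 0| + |a 1| + |a 2|) * ‖y‖ := by rw [add_mul, add_mul]; linarith
  set K : ℝ := Ka * R' with hKdef
  clear_value K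
  have hK0 : 0 ≤ K := by rw [hKdef]; exact mul_nonneg hKa0 hR'pos.le
  -- uniform continuity of gtest on a compact interval
  have huc := (isCompact_Icc (a := -(K+1)) (b := K+1)).uniformContinuousOn_of_continuous
    (gtest.continuous.continuousOn)
  rw [Metric.uniformContinuousOn_iff] at huc
  obtain ⟨δ'', hδ''pos, hδ''⟩ := huc ε₁ hε₁pos
  set δ' : ℝ := min (δ'' / 2) 1 with hδ'def
  clear_value δ'
  have hδ'pos : 0 < δ' := by rw [hδ'def]; exact lt_min (by linarith) one_pos
  have hδ'le1 : δ' ≤ 1 := by rw [hδ'def]; exact min_le_right _ _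
  have hδ'lt : δ' < δ'' := by
    rw [hδ'def]; exact lt_of_le_of_lt (min_le_left _ _) (by linarith)
  set ε₀ : ℝ := δ' / R' with hε₀def
  clear_value ε₀
  have hε₀pos : 0 < ε₀ := by rw [hε₀def]; exact div_pos hδ'pos hR'pos
  obtain ⟨δ, hδpos, hkey⟩ :=
    hfun_key rN γ1 γ2 γ3 φ hγN hgpos hphi hφ a ha0 ha1 ha2 ε₀ hε₀pos
  -- the eventualities
  have E1 := hl.eventually_ge_atTop (max (R' / δ) 1)
  have E2a := extract_aemeasurable _ μ hconv 0
  have E2b := extract_aemeasurable _ μ hconv 1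
  have E2c := extract_aemeasurable _ μ hconv 2
  have E3 : ∀ᶠ T in atTop,
      ∫ ω, χ (![l T * (g1 T ω - γ1), l T * (g2 T ω - γ2), l T * (g3 T ω - γ3)]) ≤
        2 * ε₁ := by
    have := (hconv χ).eventually
      (eventually_le_nhds (lt_of_le_of_lt hχμ (by linarith : ε₁ < 2 * ε₁)))
    exact this
  have E4 := (Metric.tendsto_nhds.mp hconvG) ε₁ hε₁pos
  filter_upwards [E1, E2a, E2b, E2c, E3, E4] with T hlT hm1 hm2 hm3 hχT hGT
  have hlT1 : (1:ℝ) ≤ l T := le_trans (le_max_right _ _) hlT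
  have hlTpos : (0:ℝ) < l T := lt_of_lt_of_le one_pos hlT1
  have hlTne : l T ≠ 0 := ne_of_gt hlTpos
  have hlTRδ : R' / δ ≤ l T := le_trans (le_max_left _ _) hlT
  have hm1' : AEMeasurable (fun ω => l T * (g1 T ω - γ1)) (ℙ : Measure Ω) := by
    simpa using hm1
  have hm2' : AEMeasurable (fun ω => l T * (g2 T ω - γ2)) (ℙ : Measure Ω) := by
    simpa using hm2
  have hm3' : AEMeasurable (fun ω => l T * (g3 T ω - γ3)) (ℙ : Measure Ω) := by
    simpa using hm3
  set Y' : Ω → (Fin 3 → ℝ) := fun ω => ![hm1'.mk _ ω, hm2'.mk _ ω, hm3'.mk _ ω] with hY'def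
  have hY'meas : Measurable Y' := by
    rw [hY'def, measurable_pi_iff]
    intro j
    fin_cases j
    · simpa using hm1'.measurable_mk
    · simpa using hm2'.measurable_mk
    · simpa using hm3'.measurable_mk
  have hYY' : ∀ᵐ ω ∂(ℙ : Measure Ω),
      (![l T * (g1 T ω - γ1), l T * (g2 T ω - γ2), l T * (g3 T ω - γ3)] : Fin 3 → ℝ)
        = Y' ω := by
    filter_upwards [hm1'.ae_eq_mk, hm2'.ae_eq_mk, hm3'.ae_eq_mk] with ω e1 e2 e3
    rw [hY'def]
    funext j
    fin_cases j
    · simpa using e1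
    · simpa using e2
    · simpa using e3
  set FT : (Fin 3 → ℝ) → ℝ :=
    fun y => l T * (hfun rN (![γ1, γ2, γ3] + (l T)⁻¹ • y) - φ) with hFTdef
  have hFTmeas : Measurable FT := by
    rw [hFTdef]
    apply Measurable.const_mul
    apply Measurable.sub_const
    exact (hfun_measurable rN).comp
      ((continuous_const.add (continuous_id.const_smul ((l T)⁻¹))).measurable)
  have hident : ∀ ω : Ω, l T * (φhat T ω - φ) =
      FT (![l T * (g1 T ω - γ1), l T * (g2 T ω - γ2), l T * (g3 T ω - γ3)]) := by
    intro ω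
    have hvec : (![γ1, γ2, γ3] : Fin 3 → ℝ) + (l T)⁻¹ •
        (![l T * (g1 T ω - γ1), l T * (g2 T ω - γ2), l T * (g3 T ω - γ3)] : Fin 3 → ℝ)
        = ![g1 T ω, g2 T ω, g3 T ω] := by
      funext j
      fin_cases j
      · simp only [Pi.add_apply, Pi.smul_apply, Fin.isValue, Matrix.cons_val_zero, smul_eq_mul]
        field_simp
        change γ1 * l T + l T * (g1 T ω - γ1) = l T * g1 T ω
        ring
      · simp only [Pi.add_apply, Pi.smul_apply, Fin.isValue, Matrix.cons_val_one, Matrix.head_cons,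
          smul_eq_mul]
        field_simp
        change γ2 * l T + l T * (g2 T ω - γ2) = l T * g2 T ω
        ring
      · simp only [Pi.add_apply, Pi.smul_apply, Fin.isValue, Matrix.cons_val_two, Matrix.tail_cons,
          smul_eq_mul]
        field_simp
        change γ3 * l T + l T * (g3 T ω - γ3) = l T * g3 T ω
        ring
    rw [hFTdef]
    simp only []
    rw [hvec]
    have hval : hfun rN (![g1 T ω, g2 T ω, g3 T ω]) = φhat T ω := by
      rw [hφhat T ω, hfun]
      simp only [Matrix.cons_val_zero, Matrix.cons_val_one, Matrix.head_cons,
        Matrix.cons_val_two, Matrix.tail_cons]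
    rw [hval]
  have hFTA : ∀ y : Fin 3 → ℝ, ‖y‖ ≤ R' → |FT y - ∑ i, a i * y i| ≤ δ' := by
    intro y hy
    have hunorm : ‖(l T)⁻¹ • y‖ = ‖y‖ / l T := by
      rw [norm_smul, norm_inv, Real.norm_eq_abs, abs_of_pos hlTpos, div_eq_inv_mul]
    have hule : ‖(l T)⁻¹ • y‖ ≤ δ := by
      rw [hunorm, div_le_iff₀ hlTpos]
      rw [div_le_iff₀ hδpos] at hlTRδ
      calc ‖y‖ ≤ R' := hy
        _ ≤ l T * δ := hlTRδ
        _ = δ * l T := mul_comm _ _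
    have hk := hkey _ hule
    have hsum2 : (∑ i, a i * ((l T)⁻¹ • y) i) = (l T)⁻¹ * ∑ i, a i * y i := by
      rw [Finset.mul_sum]
      refine Finset.sum_congr rfl fun i _ => ?_
      simp only [Pi.smul_apply, smul_eq_mul]
      ring
    have heq2 : FT y - ∑ i, a i * y i
        = l T * (hfun rN (![γ1, γ2, γ3] + (l T)⁻¹ • y) - φ - ∑ i, a i * ((l T)⁻¹ • y) i) := by
      rw [hFTdef]
      simp only []
      rw [hsum2]
      field_simp
    rw [heq2, abs_mul, abs_of_pos hlTpos]
    calc l T * |hfun rN (![γ1, γ2, γ3] + (l T)⁻¹ • y) - φ - ∑ i, a i * ((l T)⁻¹ • y) i|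
        ≤ l T * (ε₀ * ‖(l T)⁻¹ • y‖) := mul_le_mul_of_nonneg_left hk hlTpos.le
      _ = ε₀ * ‖y‖ := by rw [hunorm]; field_simp
      _ ≤ ε₀ * R' := mul_le_mul_of_nonneg_left hy hε₀pos.le
      _ = δ' := by rw [hε₀def]; exact div_mul_cancel₀ _ (ne_of_gt hR'pos)
  have hpw : ∀ ω : Ω, |gtest (FT (Y' ω)) - gtest (∑ i, a i * Y' ω i)| ≤
      ε₁ + 2 * M * χ (Y' ω) := by
    intro ω
    have hχn := hχ0 (Y' ω)
    by_cases hc : ‖Y' ω‖ ≤ R'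
    · have h1 := hFTA (Y' ω) hc
      have hA : |∑ i, a i * Y' ω i| ≤ K := by
        rw [hKdef]
        exact le_trans (hA'b (Y' ω)) (mul_le_mul_of_nonneg_left hc hKa0)
      have hFTb : |FT (Y' ω)| ≤ K + 1 := by
        have h2 := abs_sub_abs_le_abs_sub (FT (Y' ω)) (∑ i, a i * Y' ω i)
        linarith only [h1, h2, hA, hδ'le1]
      have habA := abs_le.mp hA
      have habF := abs_le.mp hFTb
      have hmem1 : FT (Y' ω) ∈ Set.Icc (-(K+1)) (K+1) := by
        rw [Set.mem_Icc]; exact ⟨habF.1, habF.2⟩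
      have hmem2 : (∑ i, a i * Y' ω i) ∈ Set.Icc (-(K+1)) (K+1) := by
        rw [Set.mem_Icc]
        exact ⟨by linarith only [habA.1], by linarith only [habA.2]⟩
      have hd := hδ'' _ hmem1 _ hmem2
        (by rw [Real.dist_eq]; exact lt_of_le_of_lt h1 hδ'lt)
      rw [Real.dist_eq] at hd
      have hn2 : 0 ≤ 2 * M * χ (Y' ω) := mul_nonneg (by linarith only [hM0]) hχn
      linarith only [hd, hn2]
    · have hχ1 : χ (Y' ω) = 1 := by
        rw [hχcoe]
        push_neg at hc
        rw [hR'def] at hc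
        have h2 : (1:ℝ) ≤ ‖Y' ω‖ - R := by linarith only [hc]
        rw [max_eq_right (by linarith only [h2] : (0:ℝ) ≤ ‖Y' ω‖ - R), min_eq_left h2]
      rw [hχ1]
      have h3 : |gtest (FT (Y' ω)) - gtest (∑ i, a i * Y' ω i)|
          ≤ |gtest (FT (Y' ω))| + |gtest (∑ i, a i * Y' ω i)| := by
        have := norm_sub_le (gtest (FT (Y' ω))) (gtest (∑ i, a i * Y' ω i))
        simpa [Real.norm_eq_abs] using this
      have h4 := hMb (FT (Y' ω))
      have h5 := hMb (∑ i, a i * Y' ω i)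
      linarith only [h3, h4, h5, hε₁pos]
  have hi1 : Integrable (fun ω => gtest (FT (Y' ω))) (ℙ : Measure Ω) := by
    refine Integrable.mono' (integrable_const M)
      ((gtest.continuous.measurable.comp (hFTmeas.comp hY'meas)).aestronglyMeasurable)
      (Filter.Eventually.of_forall fun ω => ?_)
    rw [Real.norm_eq_abs]; exact hMb _
  have hi2 : Integrable (fun ω => gtest (∑ i, a i * Y' ω i)) (ℙ : Measure Ω) := by
    refine Integrable.mono' (integrable_const M)
      ((gtest.continuous.measurable.comp (hA'cont.measurable.comp hY'meas)).aestronglyMeasurable)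
      (Filter.Eventually.of_forall fun ω => ?_)
    rw [Real.norm_eq_abs]; exact hMb _
  have hiχ : Integrable (fun ω => χ (Y' ω)) (ℙ : Measure Ω) := by
    refine Integrable.mono' (integrable_const ‖χ‖)
      ((χ.continuous.measurable.comp hY'meas).aestronglyMeasurable)
      (Filter.Eventually.of_forall fun ω => χ.norm_coe_le_norm _)
  have hI1 : ∫ ω, gtest (l T * (φhat T ω - φ)) = ∫ ω, gtest (FT (Y' ω)) := by
    refine integral_congr_ae ?_
    filter_upwards [hYY'] with ω hω
    rw [hident ω, hω]
  have hI2 : ∫ ω, Gtest (![l T * (g1 T ω - γ1), l T * (g2 T ω - γ2),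
        l T * (g3 T ω - γ3)]) = ∫ ω, gtest (∑ i, a i * Y' ω i) := by
    refine integral_congr_ae ?_
    filter_upwards [hYY'] with ω hω
    rw [hGtestx, hω]
  have hIχ : ∫ ω, χ (![l T * (g1 T ω - γ1), l T * (g2 T ω - γ2), l T * (g3 T ω - γ3)])
      = ∫ ω, χ (Y' ω) := by
    refine integral_congr_ae ?_
    filter_upwards [hYY'] with ω hω
    rw [hω]
  have hχle : ∫ ω, χ (Y' ω) ≤ 2 * ε₁ := by rw [← hIχ]; exact hχT
  have hsub : |(∫ ω, gtest (FT (Y' ω))) - ∫ ω, gtest (∑ i, a i * Y' ω i)|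
      ≤ ε₁ + 2 * M * (2 * ε₁) := by
    rw [← integral_sub hi1 hi2]
    have h1 : |∫ ω, (gtest (FT (Y' ω)) - gtest (∑ i, a i * Y' ω i))|
        ≤ ∫ ω, |gtest (FT (Y' ω)) - gtest (∑ i, a i * Y' ω i)| := by
      have := norm_integral_le_integral_norm
        (f := fun ω => gtest (FT (Y' ω)) - gtest (∑ i, a i * Y' ω i)) (μ := (ℙ : Measure Ω))
      simpa [Real.norm_eq_abs] using this
    have h2 : ∫ ω, |gtest (FT (Y' ω)) - gtest (∑ i, a i * Y' ω i)|
        ≤ ∫ ω, (ε₁ + 2 * M * χ (Y' ω)) :=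
      integral_mono (hi1.sub hi2).abs
        ((integrable_const ε₁).add (hiχ.const_mul (2 * M))) hpw
    have h3 : ∫ ω, (ε₁ + 2 * M * χ (Y' ω)) = ε₁ + 2 * M * ∫ ω, χ (Y' ω) := by
      rw [integral_add (integrable_const ε₁) (hiχ.const_mul (2 * M)), integral_const,
        integral_const_mul]
      simp
    have h4 : 2 * M * ∫ ω, χ (Y' ω) ≤ 2 * M * (2 * ε₁) :=
      mul_le_mul_of_nonneg_left hχle (by linarith only [hM0])
    linarith only [h1, h2, h3, h4]
  simp only [Real.dist_eq] at hGT ⊢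
  rw [hI1]
  rw [hI2] at hGT
  have htri := abs_sub_le (∫ ω, gtest (FT (Y' ω))) (∫ ω, gtest (∑ i, a i * Y' ω i))
    (∫ x, gtest x ∂(gaussianReal 0 Sphi.toNNReal))
  linarith only [htri, hsub, hGT, hε₁ε]
end
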